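/- Call-by-value simulation of the λμ-calculus by the λ̄μμ̃-calculus: if a λμ-term (or command) t reduces to w by one call-by-value λμ-reduction step, then there exists a λ̄μμ̃-term (or command) u such that t† reduces to u by zero or more call-by-value λ̄μμ̃-reduction steps and w† reduces to u by zero or more linear call-by-value λ̄μμ̃-reduction steps. -/

import Mathlib

set_option autoImplicit true

namespace CHSim

/-- Lift a de Bruijn renaming under a binder. -/
def upr (ξ : ℕ → ℕ) : ℕ → ℕ
  | 0 => 0
  | k+1 => ξ k + 1

/-! ## The λμ-calculus (de Bruijn representation).

λ-variables and μ-variables each have their own name space of de Bruijn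
indices.  `abs t` is `λx.t` (binding λ-index 0) and `mabs c` is `μα.c`
(binding μ-index 0); `cmd a t` is the command `[a]t`. -/

mutual
  inductive Tm : Type
    | var : ℕ → Tm
    | abs : Tm → Tm
    | app : Tm → Tm → Tm
    | mabs : Cm → Tm
  inductive Cm : Type
    | cmd : ℕ → Tm → Cm
end

/-- λμ-contexts `e ::= ⟨α⟩ | ⟨β⟩(t ·) | e · t`. -/
inductive Ct : Type
  | cvar : ℕ → Ct
  | push : ℕ → Tm → Ct
  | cons : Ct → Tm → Ct

/-- Filling a λμ-context with a term: `⟨α⟩⟨t⟩ = [α]t`,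
`(⟨β⟩(u ·))⟨t⟩ = [β](u t)`, `(h · u)⟨t⟩ = h⟨t u⟩`. -/
def fill : Ct → Tm → Cm
  | .cvar a, t => .cmd a t
  | .push b u, t => .cmd b (.app u t)
  | .cons h u, t => fill h (.app t u)

mutual
  /-- Renaming of λ-variables in λμ-terms. -/
  def renLT (ξ : ℕ → ℕ) : Tm → Tm
    | .var x => .var (ξ x)
    | .abs t => .abs (renLT (upr ξ) t)
    | .app t u => .app (renLT ξ t) (renLT ξ u)
    | .mabs c => .mabs (renLC ξ c)
  /-- Renaming of λ-variables in λμ-commands. -/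
  def renLC (ξ : ℕ → ℕ) : Cm → Cm
    | .cmd a t => .cmd a (renLT ξ t)
end

mutual
  /-- Renaming of μ-variables in λμ-terms. -/
  def renMT (ξ : ℕ → ℕ) : Tm → Tm
    | .var x => .var x
    | .abs t => .abs (renMT ξ t)
    | .app t u => .app (renMT ξ t) (renMT ξ u)
    | .mabs c => .mabs (renMC (upr ξ) c)
  /-- Renaming of μ-variables in λμ-commands. -/
  def renMC (ξ : ℕ → ℕ) : Cm → Cm
    | .cmd a t => .cmd (ξ a) (renMT ξ t)
end

/-- Renaming of λ-variables in λμ-contexts. -/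
def renLE (ξ : ℕ → ℕ) : Ct → Ct
  | .cvar a => .cvar a
  | .push b t => .push b (renLT ξ t)
  | .cons e t => .cons (renLE ξ e) (renLT ξ t)

/-- Renaming of μ-variables in λμ-contexts. -/
def renME (ξ : ℕ → ℕ) : Ct → Ct
  | .cvar a => .cvar (ξ a)
  | .push b t => .push (ξ b) (renMT ξ t)
  | .cons e t => .cons (renME ξ e) (renMT ξ t)

/-- Lifting a λ-substitution under a λ-binder. -/
def upsL (σ : ℕ → Tm) : ℕ → Tm
  | 0 => .var 0
  | k+1 => renLT Nat.succ (σ k)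

mutual
  /-- (Capture-avoiding) substitution for λ-variables in λμ-terms. -/
  def lsubT (σ : ℕ → Tm) : Tm → Tm
    | .var x => σ x
    | .abs t => .abs (lsubT (upsL σ) t)
    | .app t u => .app (lsubT σ t) (lsubT σ u)
    | .mabs c => .mabs (lsubC (fun k => renMT Nat.succ (σ k)) c)
  /-- Substitution for λ-variables in λμ-commands. -/
  def lsubC (σ : ℕ → Tm) : Cm → Cm
    | .cmd a t => .cmd a (lsubT σ t)
end

/-- Substitution for λ-variables in λμ-contexts. -/
def lsubE (σ : ℕ → Tm) : Ct → Ct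
  | .cvar a => .cvar a
  | .push b t => .push b (lsubT σ t)
  | .cons e t => .cons (lsubE σ e) (lsubT σ t)

/-- The substitution replacing the λ-variable `x` by `u`. -/
def sub1L (x : ℕ) (u : Tm) : ℕ → Tm := fun k => if k = x then u else .var k

/-- The β-substitution replacing the bound λ-variable 0 by `u`. -/
def sub0L (u : Tm) : ℕ → Tm
  | 0 => u
  | k+1 => .var k

/-- Lifting a structural (μ-)substitution under a μ-binder. -/
def upsM (σ : ℕ → Ct) : ℕ → Ct
  | 0 => .cvar 0
  | k+1 => renME Nat.succ (σ k)

mutual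
  /-- Structural substitution of λμ-contexts for μ-variables in λμ-terms:
  every subcommand `[α]u` is replaced by `(σ α)⟨u[σ]⟩`. -/
  def msubT (σ : ℕ → Ct) : Tm → Tm
    | .var x => .var x
    | .abs t => .abs (msubT (fun k => renLE Nat.succ (σ k)) t)
    | .app t u => .app (msubT σ t) (msubT σ u)
    | .mabs c => .mabs (msubC (upsM σ) c)
  /-- Structural substitution in λμ-commands. -/
  def msubC (σ : ℕ → Ct) : Cm → Cm
    | .cmd a t => fill (σ a) (msubT σ t)
end

/-- Structural substitution in λμ-contexts (the head variable of
`⟨β⟩(t ·)` is, by the freshness convention of the translations,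
never the substituted variable, so it is left untouched). -/
def msubE (σ : ℕ → Ct) : Ct → Ct
  | .cvar a => σ a
  | .push b t => .push b (msubT σ t)
  | .cons e t => .cons (msubE σ e) (msubT σ t)

/-- The structural substitution replacing the μ-variable `a` by the context `e`. -/
def sub1M (a : ℕ) (e : Ct) : ℕ → Ct := fun k => if k = a then e else .cvar k

/-- The structural substitution replacing the bound μ-variable 0 by the
context `e` (removing the binder). -/
def sub0M (e : Ct) : ℕ → Ct
  | 0 => e
  | k+1 => .cvar k

mutual
  /-- Number of free occurrences of the λ-variable `x` in a λμ-term. -/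
  def cntLT (x : ℕ) : Tm → ℕ
    | .var y => if y = x then 1 else 0
    | .abs t => cntLT (x+1) t
    | .app t u => cntLT x t + cntLT x u
    | .mabs c => cntLC x c
  /-- Number of free occurrences of the λ-variable `x` in a λμ-command. -/
  def cntLC (x : ℕ) : Cm → ℕ
    | .cmd _ t => cntLT x t
end

/-- λμ-values `v ::= x | λx.t`. -/
inductive IsVal : Tm → Prop
  | var (x : ℕ) : IsVal (.var x)
  | abs (t : Tm) : IsVal (.abs t)

/-! ### Reduction in λμ: congruence closure of root rules -/

mutual
  /-- Congruence (compatible) closure of root relations, term level. -/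
  inductive KT (R1 : Tm → Tm → Prop) (R2 : Cm → Cm → Prop) : Tm → Tm → Prop
    | root {t t'} : R1 t t' → KT R1 R2 t t'
    | absC {t t'} : KT R1 R2 t t' → KT R1 R2 (.abs t) (.abs t')
    | appL {t t'} (u) : KT R1 R2 t t' → KT R1 R2 (.app t u) (.app t' u)
    | appR (t) {u u'} : KT R1 R2 u u' → KT R1 R2 (.app t u) (.app t u')
    | mabsC {c c'} : KC R1 R2 c c' → KT R1 R2 (.mabs c) (.mabs c')
  /-- Congruence (compatible) closure of root relations, command level. -/
  inductive KC (R1 : Tm → Tm → Prop) (R2 : Cm → Cm → Prop) : Cm → Cm → Prop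
    | root {c c'} : R2 c c' → KC R1 R2 c c'
    | cmdC (a) {t t'} : KT R1 R2 t t' → KC R1 R2 (.cmd a t) (.cmd a t')
end

/-- Term-level root rules of the undirected λμ-calculus: β, μ, μ', θ. -/
inductive RootT : Tm → Tm → Prop
  | beta (u t : Tm) : RootT (.app (.abs u) t) (lsubT (sub0L t) u)
  | mu (c : Cm) (t : Tm) : RootT (.app (.mabs c) t)
      (.mabs (msubC (sub1M 0 (.cons (.cvar 0) (renMT Nat.succ t))) c))
  | mu' (t : Tm) (c : Cm) : RootT (.app t (.mabs c))
      (.mabs (msubC (sub1M 0 (.push 0 (renMT Nat.succ t))) c))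
  | theta (t : Tm) : RootT (.mabs (.cmd 0 (renMT Nat.succ t))) t

/-- Command-level root rule of the λμ-calculus: ρ. -/
inductive RootC : Cm → Cm → Prop
  | rho (b : ℕ) (c : Cm) : RootC (.cmd b (.mabs c)) (msubC (sub0M (.cvar b)) c)

/-- Term-level *linear* root rules of the λμ-calculus: θ, and β when the
argument is a variable or the bound variable occurs exactly once. -/
inductive RootTlin : Tm → Tm → Prop
  | beta (u t : Tm) : ((∃ y, t = Tm.var y) ∨ cntLT 0 u = 1) →
      RootTlin (.app (.abs u) t) (lsubT (sub0L t) u)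
  | theta (t : Tm) : RootTlin (.mabs (.cmd 0 (renMT Nat.succ t))) t

/-- Term-level root rules of call-by-name λμ: β, μ, θ (no μ'). -/
inductive RootTn : Tm → Tm → Prop
  | beta (u t : Tm) : RootTn (.app (.abs u) t) (lsubT (sub0L t) u)
  | mu (c : Cm) (t : Tm) : RootTn (.app (.mabs c) t)
      (.mabs (msubC (sub1M 0 (.cons (.cvar 0) (renMT Nat.succ t))) c))
  | theta (t : Tm) : RootTn (.mabs (.cmd 0 (renMT Nat.succ t))) t

/-- Term-level root rules of call-by-value λμ: βv, μv, μ', θ. -/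
inductive RootTv : Tm → Tm → Prop
  | betav (u t : Tm) : IsVal t → RootTv (.app (.abs u) t) (lsubT (sub0L t) u)
  | muv (c : Cm) (t : Tm) : IsVal t → RootTv (.app (.mabs c) t)
      (.mabs (msubC (sub1M 0 (.cons (.cvar 0) (renMT Nat.succ t))) c))
  | mu' (t : Tm) (c : Cm) : RootTv (.app t (.mabs c))
      (.mabs (msubC (sub1M 0 (.push 0 (renMT Nat.succ t))) c))
  | theta (t : Tm) : RootTv (.mabs (.cmd 0 (renMT Nat.succ t))) t

/-- Term-level *linear call-by-value* root rules of λμ. -/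
inductive RootTvlin : Tm → Tm → Prop
  | betav (u t : Tm) : IsVal t → ((∃ y, t = Tm.var y) ∨ cntLT 0 u = 1) →
      RootTvlin (.app (.abs u) t) (lsubT (sub0L t) u)
  | theta (t : Tm) : RootTvlin (.mabs (.cmd 0 (renMT Nat.succ t))) t

/-- One-step λμ-reduction (β, μ, μ', ρ, θ), terms. -/
abbrev StepT := KT RootT RootC
/-- One-step λμ-reduction (β, μ, μ', ρ, θ), commands. -/
abbrev StepC := KC RootT RootC
/-- One-step linear λμ-reduction, terms. -/
abbrev LStepT := KT RootTlin RootC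
/-- One-step linear λμ-reduction, commands. -/
abbrev LStepC := KC RootTlin RootC
/-- One-step call-by-name λμ-reduction, terms. -/
abbrev StepNT := KT RootTn RootC
/-- One-step call-by-name λμ-reduction, commands. -/
abbrev StepNC := KC RootTn RootC
/-- One-step call-by-value λμ-reduction, terms. -/
abbrev StepVT := KT RootTv RootC
/-- One-step call-by-value λμ-reduction, commands. -/
abbrev StepVC := KC RootTv RootC
/-- One-step linear call-by-value λμ-reduction, terms. -/
abbrev LStepVT := KT RootTvlin RootC
/-- One-step linear call-by-value λμ-reduction, commands. -/
abbrev LStepVC := KC RootTvlin RootC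

/-- Reflexive-transitive closure. -/
abbrev Star {α : Type} (r : α → α → Prop) : α → α → Prop := Relation.ReflTransGen r

/-! ## The λ̄μμ̃-calculus (de Bruijn representation). -/

mutual
  inductive BTm : Type
    | var : ℕ → BTm
    | abs : BTm → BTm
    | mabs : BCm → BTm
  inductive BCm : Type
    | cut : BTm → BCt → BCm
  inductive BCt : Type
    | cvar : ℕ → BCt
    | cons : BTm → BCt → BCt
    | tmu : BCm → BCt
end

mutual
  /-- Renaming of λ-variables in λ̄μμ̃-terms. -/
  def brenLT (ξ : ℕ → ℕ) : BTm → BTm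
    | .var x => .var (ξ x)
    | .abs t => .abs (brenLT (upr ξ) t)
    | .mabs c => .mabs (brenLC ξ c)
  def brenLC (ξ : ℕ → ℕ) : BCm → BCm
    | .cut t e => .cut (brenLT ξ t) (brenLE ξ e)
  def brenLE (ξ : ℕ → ℕ) : BCt → BCt
    | .cvar a => .cvar a
    | .cons t e => .cons (brenLT ξ t) (brenLE ξ e)
    | .tmu c => .tmu (brenLC (upr ξ) c)
end

mutual
  /-- Renaming of μ-variables in λ̄μμ̃-terms. -/
  def brenMT (ξ : ℕ → ℕ) : BTm → BTm
    | .var x => .var x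
    | .abs t => .abs (brenMT ξ t)
    | .mabs c => .mabs (brenMC (upr ξ) c)
  def brenMC (ξ : ℕ → ℕ) : BCm → BCm
    | .cut t e => .cut (brenMT ξ t) (brenME ξ e)
  def brenME (ξ : ℕ → ℕ) : BCt → BCt
    | .cvar a => .cvar (ξ a)
    | .cons t e => .cons (brenMT ξ t) (brenME ξ e)
    | .tmu c => .tmu (brenMC ξ c)
end

def bupsL (σ : ℕ → BTm) : ℕ → BTm
  | 0 => .var 0
  | k+1 => brenLT Nat.succ (σ k)

mutual
  /-- Substitution for λ-variables in λ̄μμ̃-terms. -/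
  def blsubT (σ : ℕ → BTm) : BTm → BTm
    | .var x => σ x
    | .abs t => .abs (blsubT (bupsL σ) t)
    | .mabs c => .mabs (blsubC (fun k => brenMT Nat.succ (σ k)) c)
  def blsubC (σ : ℕ → BTm) : BCm → BCm
    | .cut t e => .cut (blsubT σ t) (blsubE σ e)
  def blsubE (σ : ℕ → BTm) : BCt → BCt
    | .cvar a => .cvar a
    | .cons t e => .cons (blsubT σ t) (blsubE σ e)
    | .tmu c => .tmu (blsubC (bupsL σ) c)
end

def bsub1L (x : ℕ) (u : BTm) : ℕ → BTm := fun k => if k = x then u else .var k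

def bsub0L (u : BTm) : ℕ → BTm
  | 0 => u
  | k+1 => .var k

def bupsM (σ : ℕ → BCt) : ℕ → BCt
  | 0 => .cvar 0
  | k+1 => brenME Nat.succ (σ k)

mutual
  /-- Structural substitution of contexts for μ-variables in λ̄μμ̃-terms. -/
  def bmsubT (σ : ℕ → BCt) : BTm → BTm
    | .var x => .var x
    | .abs t => .abs (bmsubT (fun k => brenLE Nat.succ (σ k)) t)
    | .mabs c => .mabs (bmsubC (bupsM σ) c)
  def bmsubC (σ : ℕ → BCt) : BCm → BCm
    | .cut t e => .cut (bmsubT σ t) (bmsubE σ e)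
  def bmsubE (σ : ℕ → BCt) : BCt → BCt
    | .cvar a => σ a
    | .cons t e => .cons (bmsubT σ t) (bmsubE σ e)
    | .tmu c => .tmu (bmsubC (fun k => brenLE Nat.succ (σ k)) c)
end

def bsub1M (a : ℕ) (e : BCt) : ℕ → BCt := fun k => if k = a then e else .cvar k

def bsub0M (e : BCt) : ℕ → BCt
  | 0 => e
  | k+1 => .cvar k

mutual
  /-- Number of free occurrences of the λ-variable `x` in a λ̄μμ̃-term. -/
  def bcntLT (x : ℕ) : BTm → ℕ
    | .var y => if y = x then 1 else 0
    | .abs t => bcntLT (x+1) t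
    | .mabs c => bcntLC x c
  def bcntLC (x : ℕ) : BCm → ℕ
    | .cut t e => bcntLT x t + bcntLE x e
  def bcntLE (x : ℕ) : BCt → ℕ
    | .cvar _ => 0
    | .cons t e => bcntLT x t + bcntLE x e
    | .tmu c => bcntLC (x+1) c
end

mutual
  /-- Number of free occurrences of the μ-variable `a` in a λ̄μμ̃-term. -/
  def bcntMT (a : ℕ) : BTm → ℕ
    | .var _ => 0
    | .abs t => bcntMT a t
    | .mabs c => bcntMC (a+1) c
  def bcntMC (a : ℕ) : BCm → ℕ
    | .cut t e => bcntMT a t + bcntME a e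
  def bcntME (a : ℕ) : BCt → ℕ
    | .cvar b => if b = a then 1 else 0
    | .cons t e => bcntMT a t + bcntME a e
    | .tmu c => bcntMC a c
end

/-- λ̄μμ̃-values `v ::= x | λx.t`. -/
inductive BIsVal : BTm → Prop
  | var (x : ℕ) : BIsVal (.var x)
  | abs (t : BTm) : BIsVal (.abs t)

/-- Stacks (the contexts of λ̄μμ̃_T): `s ::= α | t · s`. -/
inductive IsStk : BCt → Prop
  | cvar (a : ℕ) : IsStk (.cvar a)
  | cons (t : BTm) {s : BCt} : IsStk s → IsStk (.cons t s)

/-! ### Reduction in λ̄μμ̃: congruence closure of root rules -/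

mutual
  inductive JT (R1 : BTm → BTm → Prop) (R2 : BCm → BCm → Prop) : BTm → BTm → Prop
    | root {t t'} : R1 t t' → JT R1 R2 t t'
    | absC {t t'} : JT R1 R2 t t' → JT R1 R2 (.abs t) (.abs t')
    | mabsC {c c'} : JC R1 R2 c c' → JT R1 R2 (.mabs c) (.mabs c')
  inductive JC (R1 : BTm → BTm → Prop) (R2 : BCm → BCm → Prop) : BCm → BCm → Prop
    | root {c c'} : R2 c c' → JC R1 R2 c c'
    | cutL {t t'} (e) : JT R1 R2 t t' → JC R1 R2 (.cut t e) (.cut t' e)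
    | cutR (t) {e e'} : JE R1 R2 e e' → JC R1 R2 (.cut t e) (.cut t e')
  inductive JE (R1 : BTm → BTm → Prop) (R2 : BCm → BCm → Prop) : BCt → BCt → Prop
    | consL {t t'} (e) : JT R1 R2 t t' → JE R1 R2 (.cons t e) (.cons t' e)
    | consR (t) {e e'} : JE R1 R2 e e' → JE R1 R2 (.cons t e) (.cons t e')
    | tmuC {c c'} : JC R1 R2 c c' → JE R1 R2 (.tmu c) (.tmu c')
end

/-- The term-level root rule of λ̄μμ̃: θ (shared by all evaluation disciplines). -/
inductive BRootT : BTm → BTm → Prop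
  | theta (t : BTm) : BRootT (.mabs (.cut (brenMT Nat.succ t) (.cvar 0))) t

/-- Command-level root rules of the undirected λ̄μμ̃-calculus: β, μ, μ̃. -/
inductive BRootC : BCm → BCm → Prop
  | beta (u t : BTm) (e : BCt) :
      BRootC (.cut (.abs u) (.cons t e)) (.cut t (.tmu (.cut u (brenLE Nat.succ e))))
  | mu (c : BCm) (e : BCt) : BRootC (.cut (.mabs c) e) (bmsubC (bsub0M e) c)
  | mutilde (t : BTm) (c : BCm) : BRootC (.cut t (.tmu c)) (blsubC (bsub0L t) c)

/-- Command-level *linear* root rules of λ̄μμ̃: β always; μ (resp. μ̃) when the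
substituted context (resp. term) is a variable or the bound variable occurs
exactly once in the command. -/
inductive BRootClin : BCm → BCm → Prop
  | beta (u t : BTm) (e : BCt) :
      BRootClin (.cut (.abs u) (.cons t e)) (.cut t (.tmu (.cut u (brenLE Nat.succ e))))
  | mu (c : BCm) (e : BCt) : ((∃ a, e = BCt.cvar a) ∨ bcntMC 0 c = 1) →
      BRootClin (.cut (.mabs c) e) (bmsubC (bsub0M e) c)
  | mutilde (t : BTm) (c : BCm) : ((∃ x, t = BTm.var x) ∨ bcntLC 0 c = 1) →
      BRootClin (.cut t (.tmu c)) (blsubC (bsub0L t) c)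

/-- Command-level root rules of call-by-name λ̄μμ̃ (λ̄μμ̃_T): β, μₙ (stacks), μ̃. -/
inductive BRootCn : BCm → BCm → Prop
  | beta (u t : BTm) (e : BCt) :
      BRootCn (.cut (.abs u) (.cons t e)) (.cut t (.tmu (.cut u (brenLE Nat.succ e))))
  | mun (c : BCm) (s : BCt) : IsStk s → BRootCn (.cut (.mabs c) s) (bmsubC (bsub0M s) c)
  | mutilde (t : BTm) (c : BCm) : BRootCn (.cut t (.tmu c)) (blsubC (bsub0L t) c)

/-- Command-level *linear call-by-name* root rules of λ̄μμ̃. -/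
inductive BRootCnlin : BCm → BCm → Prop
  | beta (u t : BTm) (e : BCt) :
      BRootCnlin (.cut (.abs u) (.cons t e)) (.cut t (.tmu (.cut u (brenLE Nat.succ e))))
  | mun (c : BCm) (s : BCt) : IsStk s → ((∃ a, s = BCt.cvar a) ∨ bcntMC 0 c = 1) →
      BRootCnlin (.cut (.mabs c) s) (bmsubC (bsub0M s) c)
  | mutilde (t : BTm) (c : BCm) : ((∃ x, t = BTm.var x) ∨ bcntLC 0 c = 1) →
      BRootCnlin (.cut t (.tmu c)) (blsubC (bsub0L t) c)

/-- Command-level root rules of call-by-value λ̄μμ̃ (λ̄μμ̃_Q): β, μ, μ̃ᵥ (values). -/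
inductive BRootCv : BCm → BCm → Prop
  | beta (u t : BTm) (e : BCt) :
      BRootCv (.cut (.abs u) (.cons t e)) (.cut t (.tmu (.cut u (brenLE Nat.succ e))))
  | mu (c : BCm) (e : BCt) : BRootCv (.cut (.mabs c) e) (bmsubC (bsub0M e) c)
  | mutildev (v : BTm) (c : BCm) : BIsVal v →
      BRootCv (.cut v (.tmu c)) (blsubC (bsub0L v) c)

/-- Command-level *linear call-by-value* root rules of λ̄μμ̃. -/
inductive BRootCvlin : BCm → BCm → Prop
  | beta (u t : BTm) (e : BCt) :
      BRootCvlin (.cut (.abs u) (.cons t e)) (.cut t (.tmu (.cut u (brenLE Nat.succ e))))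
  | mu (c : BCm) (e : BCt) : ((∃ a, e = BCt.cvar a) ∨ bcntMC 0 c = 1) →
      BRootCvlin (.cut (.mabs c) e) (bmsubC (bsub0M e) c)
  | mutildev (v : BTm) (c : BCm) : BIsVal v → ((∃ x, v = BTm.var x) ∨ bcntLC 0 c = 1) →
      BRootCvlin (.cut v (.tmu c)) (blsubC (bsub0L v) c)

/-- Command-level root rules with β' instead of β: β', μ, μ̃. -/
inductive BRootCp : BCm → BCm → Prop
  | beta' (u t : BTm) (e : BCt) :
      BRootCp (.cut (.abs u) (.cons t e)) (.cut (blsubT (bsub0L t) u) e)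
  | mu (c : BCm) (e : BCt) : BRootCp (.cut (.mabs c) e) (bmsubC (bsub0M e) c)
  | mutilde (t : BTm) (c : BCm) : BRootCp (.cut t (.tmu c)) (blsubC (bsub0L t) c)

/-- Command-level call-by-name root rules with β': β', μₙ, μ̃. -/
inductive BRootCnp : BCm → BCm → Prop
  | beta' (u t : BTm) (e : BCt) :
      BRootCnp (.cut (.abs u) (.cons t e)) (.cut (blsubT (bsub0L t) u) e)
  | mun (c : BCm) (s : BCt) : IsStk s → BRootCnp (.cut (.mabs c) s) (bmsubC (bsub0M s) c)
  | mutilde (t : BTm) (c : BCm) : BRootCnp (.cut t (.tmu c)) (blsubC (bsub0L t) c)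

/-- Command-level call-by-value root rules with β': β' (values), μ, μ̃ᵥ. -/
inductive BRootCvp : BCm → BCm → Prop
  | beta' (u v : BTm) (e : BCt) : BIsVal v →
      BRootCvp (.cut (.abs u) (.cons v e)) (.cut (blsubT (bsub0L v) u) e)
  | mu (c : BCm) (e : BCt) : BRootCvp (.cut (.mabs c) e) (bmsubC (bsub0M e) c)
  | mutildev (v : BTm) (c : BCm) : BIsVal v →
      BRootCvp (.cut v (.tmu c)) (blsubC (bsub0L v) c)

/-- One-step λ̄μμ̃-reduction (β, μ, μ̃, θ), terms. -/
abbrev BStepT := JT BRootT BRootC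
abbrev BStepC := JC BRootT BRootC
abbrev BStepE := JE BRootT BRootC
/-- One-step linear λ̄μμ̃-reduction. -/
abbrev LBStepT := JT BRootT BRootClin
abbrev LBStepC := JC BRootT BRootClin
abbrev LBStepE := JE BRootT BRootClin
/-- One-step call-by-name λ̄μμ̃-reduction. -/
abbrev BStepNT := JT BRootT BRootCn
abbrev BStepNC := JC BRootT BRootCn
abbrev BStepNE := JE BRootT BRootCn
/-- One-step linear call-by-name λ̄μμ̃-reduction. -/
abbrev LBStepNT := JT BRootT BRootCnlin
abbrev LBStepNC := JC BRootT BRootCnlin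
/-- One-step call-by-value λ̄μμ̃-reduction. -/
abbrev BStepVT := JT BRootT BRootCv
abbrev BStepVC := JC BRootT BRootCv
/-- One-step linear call-by-value λ̄μμ̃-reduction. -/
abbrev LBStepVT := JT BRootT BRootCvlin
abbrev LBStepVC := JC BRootT BRootCvlin
/-- One-step λ̄μμ̃-reduction with β' (β', μ, μ̃, θ). -/
abbrev BStepPT := JT BRootT BRootCp
abbrev BStepPC := JC BRootT BRootCp
/-- One-step call-by-name λ̄μμ̃-reduction with β'. -/
abbrev BStepNPT := JT BRootT BRootCnp
abbrev BStepNPC := JC BRootT BRootCnp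
/-- One-step call-by-value λ̄μμ̃-reduction with β'. -/
abbrev BStepVPT := JT BRootT BRootCvp
abbrev BStepVPC := JC BRootT BRootCvp

/-! ## The translation `(·)†` from λμ to λ̄μμ̃ -/

mutual
  /-- `x† = x`, `(λx.u)† = λx.u†`, `(u v)† = μβ.⟨v† | μ̃y.⟨u† | y·β⟩⟩`
  (`y`, `β` fresh, realized by de Bruijn lifting), `(μα.c)† = μα.c†`. -/
  def dagT : Tm → BTm
    | .var x => .var x
    | .abs t => .abs (dagT t)
    | .app u v => .mabs (.cut (brenMT Nat.succ (dagT v))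
        (.tmu (.cut (brenLT Nat.succ (brenMT Nat.succ (dagT u)))
          (.cons (.var 0) (.cvar 0)))))
    | .mabs c => .mabs (dagC c)
  /-- `([α]t)† = ⟨t† | α⟩`. -/
  def dagC : Cm → BCm
    | .cmd a t => .cut (dagT t) (.cvar a)
end

/-- `⟨α⟩† = α`, `(⟨β⟩(t ·))† = μ̃y.⟨t† | y·β⟩`, `(h · t)† = t† · h†`. -/
def dagE : Ct → BCt
  | .cvar a => .cvar a
  | .push b t => .tmu (.cut (brenLT Nat.succ (dagT t)) (.cons (.var 0) (.cvar b)))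
  | .cons e t => .cons (dagT t) (dagE e)

/-! ## The translation `(·)∘` from λ̄μμ̃ to λμ -/

mutual
  /-- `x∘ = x`, `(λx.u)∘ = λx.u∘`, `(μα.c)∘ = μα.c∘`. -/
  def circT : BTm → Tm
    | .var x => .var x
    | .abs t => .abs (circT t)
    | .mabs c => .mabs (circC c)
  /-- `⟨t | e⟩∘ = e∘⟨t∘⟩`. -/
  def circC : BCm → Cm
    | .cut t e => fill (circE e) (circT t)
  /-- `α∘ = ⟨α⟩`, `(t · h)∘ = h∘ · t∘`,
  `(μ̃x.c)∘ = ⟨β⟩((λx.μδ.c∘) ·)` with `δ ∉ c` (realized by lifting). -/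
  def circE : BCt → Ct
    | .cvar a => .cvar a
    | .cons t e => .cons (circE e) (circT t)
    | .tmu c => .push 0 (.abs (.mabs (renMC Nat.succ (circC c))))
end


set_option autoImplicit false

open Relation

/-!
The translation is compositional, commutes with renamings and λ-substitution, and sends a
structural substitution `c[α := e]` to the λ̄μμ̃-substitution `c†[α := e†]` up to linear
reduction. Indeed, translating a filled context creates administrative redexes
`⟨μβ.⟨v† | μ̃y.⟨u† | y·β⟩⟩ | E⟩`; each is consumed by a μ-step whose bound variable occurs
once, followed by a μ̃ᵥ-step substituting `v†` for `y`, which occurs once. The second step is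
available because the contexts substituted by call-by-value rules only carry values.

Each root rule is then simulated on the source side: βᵥ by μ̃ᵥ, β, μ̃ᵥ, θ; μᵥ by μ̃ᵥ, μ;
μ' and ρ by a single μ-step; θ by θ. The translated reduct reaches the same term by the linear
unfolding above, and the congruence cases follow from compositionality.
-/

/-! ## Renamings and substitutions in λ̄μμ̃ -/

theorem upr_comp (ξ ζ : ℕ → ℕ) :
    (fun k => upr ξ (upr ζ k)) = upr (fun n => ξ (ζ n)) := by
  funext k; cases k <;> rfl

mutual
theorem brenL_brenL_T (ξ ζ : ℕ → ℕ) (t : BTm) :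
    brenLT ξ (brenLT ζ t) = brenLT (fun k => ξ (ζ k)) t := by
  cases t with
  | var x => rfl
  | abs t => simp only [brenLT, brenL_brenL_T (upr ξ) (upr ζ) t, upr_comp]
  | mabs c => simp only [brenLT, brenL_brenL_C ξ ζ c]
theorem brenL_brenL_C (ξ ζ : ℕ → ℕ) (c : BCm) :
    brenLC ξ (brenLC ζ c) = brenLC (fun k => ξ (ζ k)) c := by
  cases c with
  | cut t e => simp only [brenLC, brenL_brenL_T ξ ζ t, brenL_brenL_E ξ ζ e]
theorem brenL_brenL_E (ξ ζ : ℕ → ℕ) (e : BCt) :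
    brenLE ξ (brenLE ζ e) = brenLE (fun k => ξ (ζ k)) e := by
  cases e with
  | cvar a => rfl
  | cons t e => simp only [brenLE, brenL_brenL_T ξ ζ t, brenL_brenL_E ξ ζ e]
  | tmu c => simp only [brenLE, brenL_brenL_C (upr ξ) (upr ζ) c, upr_comp]
end

mutual
theorem brenM_brenM_T (ξ ζ : ℕ → ℕ) (t : BTm) :
    brenMT ξ (brenMT ζ t) = brenMT (fun k => ξ (ζ k)) t := by
  cases t with
  | var x => rfl
  | abs t => simp only [brenMT, brenM_brenM_T ξ ζ t]
  | mabs c => simp only [brenMT, brenM_brenM_C (upr ξ) (upr ζ) c, upr_comp]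
theorem brenM_brenM_C (ξ ζ : ℕ → ℕ) (c : BCm) :
    brenMC ξ (brenMC ζ c) = brenMC (fun k => ξ (ζ k)) c := by
  cases c with
  | cut t e => simp only [brenMC, brenM_brenM_T ξ ζ t, brenM_brenM_E ξ ζ e]
theorem brenM_brenM_E (ξ ζ : ℕ → ℕ) (e : BCt) :
    brenME ξ (brenME ζ e) = brenME (fun k => ξ (ζ k)) e := by
  cases e with
  | cvar a => rfl
  | cons t e => simp only [brenME, brenM_brenM_T ξ ζ t, brenM_brenM_E ξ ζ e]
  | tmu c => simp only [brenME, brenM_brenM_C ξ ζ c]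
end

mutual
theorem brenL_brenM_T (ξ ζ : ℕ → ℕ) (t : BTm) :
    brenLT ξ (brenMT ζ t) = brenMT ζ (brenLT ξ t) := by
  cases t with
  | var x => rfl
  | abs t => simp only [brenLT, brenMT, brenL_brenM_T (upr ξ) ζ t]
  | mabs c => simp only [brenLT, brenMT, brenL_brenM_C ξ (upr ζ) c]
theorem brenL_brenM_C (ξ ζ : ℕ → ℕ) (c : BCm) :
    brenLC ξ (brenMC ζ c) = brenMC ζ (brenLC ξ c) := by
  cases c with
  | cut t e => simp only [brenLC, brenMC, brenL_brenM_T ξ ζ t, brenL_brenM_E ξ ζ e]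
theorem brenL_brenM_E (ξ ζ : ℕ → ℕ) (e : BCt) :
    brenLE ξ (brenME ζ e) = brenME ζ (brenLE ξ e) := by
  cases e with
  | cvar a => rfl
  | cons t e => simp only [brenLE, brenME, brenL_brenM_T ξ ζ t, brenL_brenM_E ξ ζ e]
  | tmu c => simp only [brenLE, brenME, brenL_brenM_C (upr ξ) ζ c]
end

theorem brenLE_upr_brenLE_succ (ξ : ℕ → ℕ) (e : BCt) :
    brenLE (upr ξ) (brenLE Nat.succ e) = brenLE Nat.succ (brenLE ξ e) := by
  rw [brenL_brenL_E, brenL_brenL_E]; rfl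

theorem brenMT_upr_brenMT_succ (ξ : ℕ → ℕ) (t : BTm) :
    brenMT (upr ξ) (brenMT Nat.succ t) = brenMT Nat.succ (brenMT ξ t) := by
  rw [brenM_brenM_T, brenM_brenM_T]; rfl

theorem bupsL_comp (σ : ℕ → BTm) (ζ : ℕ → ℕ) :
    (fun k => bupsL σ (upr ζ k)) = bupsL (fun k => σ (ζ k)) := by
  funext k; cases k <;> rfl

mutual
theorem blsub_brenL_T (σ : ℕ → BTm) (ζ : ℕ → ℕ) (t : BTm) :
    blsubT σ (brenLT ζ t) = blsubT (fun k => σ (ζ k)) t := by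
  cases t with
  | var x => rfl
  | abs t => simp only [brenLT, blsubT, blsub_brenL_T (bupsL σ) (upr ζ) t, bupsL_comp]
  | mabs c => simp only [brenLT, blsubT, blsub_brenL_C _ ζ c]
theorem blsub_brenL_C (σ : ℕ → BTm) (ζ : ℕ → ℕ) (c : BCm) :
    blsubC σ (brenLC ζ c) = blsubC (fun k => σ (ζ k)) c := by
  cases c with
  | cut t e => simp only [brenLC, blsubC, blsub_brenL_T σ ζ t, blsub_brenL_E σ ζ e]
theorem blsub_brenL_E (σ : ℕ → BTm) (ζ : ℕ → ℕ) (e : BCt) :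
    blsubE σ (brenLE ζ e) = blsubE (fun k => σ (ζ k)) e := by
  cases e with
  | cvar a => rfl
  | cons t e => simp only [brenLE, blsubE, blsub_brenL_T σ ζ t, blsub_brenL_E σ ζ e]
  | tmu c => simp only [brenLE, blsubE, blsub_brenL_C (bupsL σ) (upr ζ) c, bupsL_comp]
end

theorem bupsM_comp (σ : ℕ → BCt) (ζ : ℕ → ℕ) :
    (fun k => bupsM σ (upr ζ k)) = bupsM (fun k => σ (ζ k)) := by
  funext k; cases k <;> rfl

mutual
theorem bmsub_brenM_T (σ : ℕ → BCt) (ζ : ℕ → ℕ) (t : BTm) :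
    bmsubT σ (brenMT ζ t) = bmsubT (fun k => σ (ζ k)) t := by
  cases t with
  | var x => rfl
  | abs t => simp only [brenMT, bmsubT, bmsub_brenM_T _ ζ t]
  | mabs c => simp only [brenMT, bmsubT, bmsub_brenM_C (bupsM σ) (upr ζ) c, bupsM_comp]
theorem bmsub_brenM_C (σ : ℕ → BCt) (ζ : ℕ → ℕ) (c : BCm) :
    bmsubC σ (brenMC ζ c) = bmsubC (fun k => σ (ζ k)) c := by
  cases c with
  | cut t e => simp only [brenMC, bmsubC, bmsub_brenM_T σ ζ t, bmsub_brenM_E σ ζ e]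
theorem bmsub_brenM_E (σ : ℕ → BCt) (ζ : ℕ → ℕ) (e : BCt) :
    bmsubE σ (brenME ζ e) = bmsubE (fun k => σ (ζ k)) e := by
  cases e with
  | cvar a => rfl
  | cons t e => simp only [brenME, bmsubE, bmsub_brenM_T σ ζ t, bmsub_brenM_E σ ζ e]
  | tmu c => simp only [brenME, bmsubE, bmsub_brenM_C _ ζ c]
end

theorem bupsL_id : bupsL (fun k => BTm.var k) = fun k => BTm.var k := by
  funext k; cases k <;> rfl

mutual
theorem blsub_id_T (t : BTm) : blsubT (fun k => BTm.var k) t = t := by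
  cases t with
  | var x => rfl
  | abs t => simp only [blsubT, bupsL_id, blsub_id_T t]
  | mabs c => exact congrArg BTm.mabs (blsub_id_C c)
theorem blsub_id_C (c : BCm) : blsubC (fun k => BTm.var k) c = c := by
  cases c with
  | cut t e => simp only [blsubC, blsub_id_T t, blsub_id_E e]
theorem blsub_id_E (e : BCt) : blsubE (fun k => BTm.var k) e = e := by
  cases e with
  | cvar a => rfl
  | cons t e => simp only [blsubE, blsub_id_T t, blsub_id_E e]
  | tmu c => simp only [blsubE, bupsL_id, blsub_id_C c]
end

theorem bupsM_id : bupsM (fun k => BCt.cvar k) = fun k => BCt.cvar k := by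
  funext k; cases k <;> rfl

mutual
theorem bmsub_id_T (t : BTm) : bmsubT (fun k => BCt.cvar k) t = t := by
  cases t with
  | var x => rfl
  | abs t => exact congrArg BTm.abs (bmsub_id_T t)
  | mabs c => simp only [bmsubT, bupsM_id, bmsub_id_C c]
theorem bmsub_id_C (c : BCm) : bmsubC (fun k => BCt.cvar k) c = c := by
  cases c with
  | cut t e => simp only [bmsubC, bmsub_id_T t, bmsub_id_E e]
theorem bmsub_id_E (e : BCt) : bmsubE (fun k => BCt.cvar k) e = e := by
  cases e with
  | cvar a => rfl
  | cons t e => simp only [bmsubE, bmsub_id_T t, bmsub_id_E e]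
  | tmu c => exact congrArg BCt.tmu (bmsub_id_C c)
end

theorem brenL_bupsL (ξ : ℕ → ℕ) (σ : ℕ → BTm) :
    (fun k => brenLT (upr ξ) (bupsL σ k)) = bupsL (fun k => brenLT ξ (σ k)) := by
  funext k; cases k with
  | zero => rfl
  | succ k =>
      show brenLT (upr ξ) (brenLT Nat.succ (σ k)) = brenLT Nat.succ (brenLT ξ (σ k))
      rw [brenL_brenL_T, brenL_brenL_T]; rfl

mutual
theorem brenL_blsub_T (ξ : ℕ → ℕ) (σ : ℕ → BTm) (t : BTm) :
    brenLT ξ (blsubT σ t) = blsubT (fun k => brenLT ξ (σ k)) t := by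
  cases t with
  | var x => rfl
  | abs t => simp only [blsubT, brenLT, brenL_blsub_T (upr ξ) (bupsL σ) t, brenL_bupsL]
  | mabs c => simp only [blsubT, brenLT, brenL_blsub_C ξ _ c, brenL_brenM_T]
theorem brenL_blsub_C (ξ : ℕ → ℕ) (σ : ℕ → BTm) (c : BCm) :
    brenLC ξ (blsubC σ c) = blsubC (fun k => brenLT ξ (σ k)) c := by
  cases c with
  | cut t e => simp only [blsubC, brenLC, brenL_blsub_T ξ σ t, brenL_blsub_E ξ σ e]
theorem brenL_blsub_E (ξ : ℕ → ℕ) (σ : ℕ → BTm) (e : BCt) :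
    brenLE ξ (blsubE σ e) = blsubE (fun k => brenLT ξ (σ k)) e := by
  cases e with
  | cvar a => rfl
  | cons t e => simp only [blsubE, brenLE, brenL_blsub_T ξ σ t, brenL_blsub_E ξ σ e]
  | tmu c => simp only [blsubE, brenLE, brenL_blsub_C (upr ξ) (bupsL σ) c, brenL_bupsL]
end

theorem brenM_bupsM (ξ : ℕ → ℕ) (σ : ℕ → BCt) :
    (fun k => brenME (upr ξ) (bupsM σ k)) = bupsM (fun k => brenME ξ (σ k)) := by
  funext k; cases k with
  | zero => rfl
  | succ k =>
      show brenME (upr ξ) (brenME Nat.succ (σ k)) = brenME Nat.succ (brenME ξ (σ k))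
      rw [brenM_brenM_E, brenM_brenM_E]; rfl

mutual
theorem brenM_bmsub_T (ξ : ℕ → ℕ) (σ : ℕ → BCt) (t : BTm) :
    brenMT ξ (bmsubT σ t) = bmsubT (fun k => brenME ξ (σ k)) t := by
  cases t with
  | var x => rfl
  | abs t =>
      simp only [bmsubT, brenMT, brenM_bmsub_T ξ _ t, ← brenL_brenM_E]
  | mabs c => simp only [bmsubT, brenMT, brenM_bmsub_C (upr ξ) (bupsM σ) c, brenM_bupsM]
theorem brenM_bmsub_C (ξ : ℕ → ℕ) (σ : ℕ → BCt) (c : BCm) :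
    brenMC ξ (bmsubC σ c) = bmsubC (fun k => brenME ξ (σ k)) c := by
  cases c with
  | cut t e => simp only [bmsubC, brenMC, brenM_bmsub_T ξ σ t, brenM_bmsub_E ξ σ e]
theorem brenM_bmsub_E (ξ : ℕ → ℕ) (σ : ℕ → BCt) (e : BCt) :
    brenME ξ (bmsubE σ e) = bmsubE (fun k => brenME ξ (σ k)) e := by
  cases e with
  | cvar a => rfl
  | cons t e => simp only [bmsubE, brenME, brenM_bmsub_T ξ σ t, brenM_bmsub_E ξ σ e]
  | tmu c =>
      simp only [bmsubE, brenME, brenM_bmsub_C ξ _ c, ← brenL_brenM_E]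
end

theorem brenM_bupsL (ξ : ℕ → ℕ) (σ : ℕ → BTm) :
    (fun k => brenMT ξ (bupsL σ k)) = bupsL (fun k => brenMT ξ (σ k)) := by
  funext k; cases k with
  | zero => rfl
  | succ k =>
      show brenMT ξ (brenLT Nat.succ (σ k)) = brenLT Nat.succ (brenMT ξ (σ k))
      rw [← brenL_brenM_T]

mutual
theorem brenM_blsub_T (ξ : ℕ → ℕ) (σ : ℕ → BTm) (t : BTm) :
    brenMT ξ (blsubT σ t) = blsubT (fun k => brenMT ξ (σ k)) (brenMT ξ t) := by
  cases t with
  | var x => rfl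
  | abs t => simp only [blsubT, brenMT, brenM_blsub_T ξ (bupsL σ) t, brenM_bupsL]
  | mabs c =>
      simp only [blsubT, brenMT, brenM_blsub_C (upr ξ) _ c, brenMT_upr_brenMT_succ]
theorem brenM_blsub_C (ξ : ℕ → ℕ) (σ : ℕ → BTm) (c : BCm) :
    brenMC ξ (blsubC σ c) = blsubC (fun k => brenMT ξ (σ k)) (brenMC ξ c) := by
  cases c with
  | cut t e => simp only [blsubC, brenMC, brenM_blsub_T ξ σ t, brenM_blsub_E ξ σ e]
theorem brenM_blsub_E (ξ : ℕ → ℕ) (σ : ℕ → BTm) (e : BCt) :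
    brenME ξ (blsubE σ e) = blsubE (fun k => brenMT ξ (σ k)) (brenME ξ e) := by
  cases e with
  | cvar a => rfl
  | cons t e => simp only [blsubE, brenME, brenM_blsub_T ξ σ t, brenM_blsub_E ξ σ e]
  | tmu c => simp only [blsubE, brenME, brenM_blsub_C ξ (bupsL σ) c, brenM_bupsL]
end

theorem brenL_bupsM (ξ : ℕ → ℕ) (σ : ℕ → BCt) :
    (fun k => brenLE ξ (bupsM σ k)) = bupsM (fun k => brenLE ξ (σ k)) := by
  funext k; cases k with
  | zero => rfl
  | succ k =>
      show brenLE ξ (brenME Nat.succ (σ k)) = brenME Nat.succ (brenLE ξ (σ k))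
      rw [brenL_brenM_E]

mutual
theorem brenL_bmsub_T (ξ : ℕ → ℕ) (σ : ℕ → BCt) (t : BTm) :
    brenLT ξ (bmsubT σ t) = bmsubT (fun k => brenLE ξ (σ k)) (brenLT ξ t) := by
  cases t with
  | var x => rfl
  | abs t =>
      simp only [bmsubT, brenLT, brenL_bmsub_T (upr ξ) _ t, brenLE_upr_brenLE_succ]
  | mabs c => simp only [bmsubT, brenLT, brenL_bmsub_C ξ (bupsM σ) c, brenL_bupsM]
theorem brenL_bmsub_C (ξ : ℕ → ℕ) (σ : ℕ → BCt) (c : BCm) :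
    brenLC ξ (bmsubC σ c) = bmsubC (fun k => brenLE ξ (σ k)) (brenLC ξ c) := by
  cases c with
  | cut t e => simp only [bmsubC, brenLC, brenL_bmsub_T ξ σ t, brenL_bmsub_E ξ σ e]
theorem brenL_bmsub_E (ξ : ℕ → ℕ) (σ : ℕ → BCt) (e : BCt) :
    brenLE ξ (bmsubE σ e) = bmsubE (fun k => brenLE ξ (σ k)) (brenLE ξ e) := by
  cases e with
  | cvar a => rfl
  | cons t e => simp only [bmsubE, brenLE, brenL_bmsub_T ξ σ t, brenL_bmsub_E ξ σ e]
  | tmu c =>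
      simp only [bmsubE, brenLE, brenL_bmsub_C (upr ξ) _ c, brenLE_upr_brenLE_succ]
end

theorem upr_eq_zero_iff (ξ : ℕ → ℕ) : ∀ k, upr ξ k = 0 ↔ k = 0
  | 0 => by simp [upr]
  | k + 1 => by simp [upr]

theorem upr_eq_succ_iff {ξ : ℕ → ℕ} {a b : ℕ} (h : ∀ k, ξ k = a ↔ k = b) :
    ∀ k, upr ξ k = a + 1 ↔ k = b + 1
  | 0 => by simp [upr]
  | k + 1 => by simpa [upr] using h k

theorem upr_ne_succ {ξ : ℕ → ℕ} {a : ℕ} (h : ∀ k, ξ k ≠ a) : ∀ k, upr ξ k ≠ a + 1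
  | 0 => by simp [upr]
  | k + 1 => by simpa [upr] using h k

mutual
theorem bcntM_brenM_T (a b : ℕ) (ξ : ℕ → ℕ) (h : ∀ k, ξ k = a ↔ k = b) (t : BTm) :
    bcntMT a (brenMT ξ t) = bcntMT b t := by
  cases t with
  | var x => rfl
  | abs t => simp only [brenMT, bcntMT, bcntM_brenM_T a b ξ h t]
  | mabs c =>
      simp only [brenMT, bcntMT]
      exact bcntM_brenM_C (a+1) (b+1) (upr ξ) (upr_eq_succ_iff h) c
theorem bcntM_brenM_C (a b : ℕ) (ξ : ℕ → ℕ) (h : ∀ k, ξ k = a ↔ k = b) (c : BCm) :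
    bcntMC a (brenMC ξ c) = bcntMC b c := by
  cases c with
  | cut t e => simp only [brenMC, bcntMC, bcntM_brenM_T a b ξ h t, bcntM_brenM_E a b ξ h e]
theorem bcntM_brenM_E (a b : ℕ) (ξ : ℕ → ℕ) (h : ∀ k, ξ k = a ↔ k = b) (e : BCt) :
    bcntME a (brenME ξ e) = bcntME b e := by
  cases e with
  | cvar c => simp only [brenME, bcntME, h c]
  | cons t e => simp only [brenME, bcntME, bcntM_brenM_T a b ξ h t, bcntM_brenM_E a b ξ h e]
  | tmu c => simp only [brenME, bcntME, bcntM_brenM_C a b ξ h c]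
end

mutual
theorem bcntM_brenM_eq_zero_T (a : ℕ) (ξ : ℕ → ℕ) (h : ∀ k, ξ k ≠ a) (t : BTm) :
    bcntMT a (brenMT ξ t) = 0 := by
  cases t with
  | var x => rfl
  | abs t => simp only [brenMT, bcntMT, bcntM_brenM_eq_zero_T a ξ h t]
  | mabs c =>
      simp only [brenMT, bcntMT]
      exact bcntM_brenM_eq_zero_C (a+1) (upr ξ) (upr_ne_succ h) c
theorem bcntM_brenM_eq_zero_C (a : ℕ) (ξ : ℕ → ℕ) (h : ∀ k, ξ k ≠ a) (c : BCm) :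
    bcntMC a (brenMC ξ c) = 0 := by
  cases c with
  | cut t e => simp only [brenMC, bcntMC,
      bcntM_brenM_eq_zero_T a ξ h t, bcntM_brenM_eq_zero_E a ξ h e]
theorem bcntM_brenM_eq_zero_E (a : ℕ) (ξ : ℕ → ℕ) (h : ∀ k, ξ k ≠ a) (e : BCt) :
    bcntME a (brenME ξ e) = 0 := by
  cases e with
  | cvar c => simp only [brenME, bcntME, h c, if_false]
  | cons t e => simp only [brenME, bcntME,
      bcntM_brenM_eq_zero_T a ξ h t, bcntM_brenM_eq_zero_E a ξ h e]
  | tmu c => simp only [brenME, bcntME, bcntM_brenM_eq_zero_C a ξ h c]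
end

mutual
theorem bcntM_brenL_T (a : ℕ) (ξ : ℕ → ℕ) (t : BTm) :
    bcntMT a (brenLT ξ t) = bcntMT a t := by
  cases t with
  | var x => rfl
  | abs t => simp only [brenLT, bcntMT, bcntM_brenL_T a (upr ξ) t]
  | mabs c => simp only [brenLT, bcntMT, bcntM_brenL_C (a+1) ξ c]
theorem bcntM_brenL_C (a : ℕ) (ξ : ℕ → ℕ) (c : BCm) :
    bcntMC a (brenLC ξ c) = bcntMC a c := by
  cases c with
  | cut t e => simp only [brenLC, bcntMC, bcntM_brenL_T a ξ t, bcntM_brenL_E a ξ e]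
theorem bcntM_brenL_E (a : ℕ) (ξ : ℕ → ℕ) (e : BCt) :
    bcntME a (brenLE ξ e) = bcntME a e := by
  cases e with
  | cvar c => rfl
  | cons t e => simp only [brenLE, bcntME, bcntM_brenL_T a ξ t, bcntM_brenL_E a ξ e]
  | tmu c => simp only [brenLE, bcntME, bcntM_brenL_C a (upr ξ) c]
end

mutual
theorem bcntL_brenL_T (a b : ℕ) (ξ : ℕ → ℕ) (h : ∀ k, ξ k = a ↔ k = b) (t : BTm) :
    bcntLT a (brenLT ξ t) = bcntLT b t := by
  cases t with
  | var x => simp only [brenLT, bcntLT, h x]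
  | abs t =>
      simp only [brenLT, bcntLT]
      exact bcntL_brenL_T (a+1) (b+1) (upr ξ) (upr_eq_succ_iff h) t
  | mabs c => simp only [brenLT, bcntLT, bcntL_brenL_C a b ξ h c]
theorem bcntL_brenL_C (a b : ℕ) (ξ : ℕ → ℕ) (h : ∀ k, ξ k = a ↔ k = b) (c : BCm) :
    bcntLC a (brenLC ξ c) = bcntLC b c := by
  cases c with
  | cut t e => simp only [brenLC, bcntLC, bcntL_brenL_T a b ξ h t, bcntL_brenL_E a b ξ h e]
theorem bcntL_brenL_E (a b : ℕ) (ξ : ℕ → ℕ) (h : ∀ k, ξ k = a ↔ k = b) (e : BCt) :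
    bcntLE a (brenLE ξ e) = bcntLE b e := by
  cases e with
  | cvar c => rfl
  | cons t e => simp only [brenLE, bcntLE, bcntL_brenL_T a b ξ h t, bcntL_brenL_E a b ξ h e]
  | tmu c =>
      simp only [brenLE, bcntLE]
      exact bcntL_brenL_C (a+1) (b+1) (upr ξ) (upr_eq_succ_iff h) c
end

mutual
theorem bcntL_brenL_eq_zero_T (a : ℕ) (ξ : ℕ → ℕ) (h : ∀ k, ξ k ≠ a) (t : BTm) :
    bcntLT a (brenLT ξ t) = 0 := by
  cases t with
  | var x => simp only [brenLT, bcntLT, h x, if_false]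
  | abs t =>
      simp only [brenLT, bcntLT]
      exact bcntL_brenL_eq_zero_T (a+1) (upr ξ) (upr_ne_succ h) t
  | mabs c => simp only [brenLT, bcntLT, bcntL_brenL_eq_zero_C a ξ h c]
theorem bcntL_brenL_eq_zero_C (a : ℕ) (ξ : ℕ → ℕ) (h : ∀ k, ξ k ≠ a) (c : BCm) :
    bcntLC a (brenLC ξ c) = 0 := by
  cases c with
  | cut t e => simp only [brenLC, bcntLC,
      bcntL_brenL_eq_zero_T a ξ h t, bcntL_brenL_eq_zero_E a ξ h e]
theorem bcntL_brenL_eq_zero_E (a : ℕ) (ξ : ℕ → ℕ) (h : ∀ k, ξ k ≠ a) (e : BCt) :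
    bcntLE a (brenLE ξ e) = 0 := by
  cases e with
  | cvar c => rfl
  | cons t e => simp only [brenLE, bcntLE,
      bcntL_brenL_eq_zero_T a ξ h t, bcntL_brenL_eq_zero_E a ξ h e]
  | tmu c =>
      simp only [brenLE, bcntLE]
      exact bcntL_brenL_eq_zero_C (a+1) (upr ξ) (upr_ne_succ h) c
end

mutual
theorem bcntL_brenM_T (a : ℕ) (ξ : ℕ → ℕ) (t : BTm) :
    bcntLT a (brenMT ξ t) = bcntLT a t := by
  cases t with
  | var x => rfl
  | abs t => simp only [brenMT, bcntLT, bcntL_brenM_T (a+1) ξ t]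
  | mabs c => simp only [brenMT, bcntLT, bcntL_brenM_C a (upr ξ) c]
theorem bcntL_brenM_C (a : ℕ) (ξ : ℕ → ℕ) (c : BCm) :
    bcntLC a (brenMC ξ c) = bcntLC a c := by
  cases c with
  | cut t e => simp only [brenMC, bcntLC, bcntL_brenM_T a ξ t, bcntL_brenM_E a ξ e]
theorem bcntL_brenM_E (a : ℕ) (ξ : ℕ → ℕ) (e : BCt) :
    bcntLE a (brenME ξ e) = bcntLE a e := by
  cases e with
  | cvar c => rfl
  | cons t e => simp only [brenME, bcntLE, bcntL_brenM_T a ξ t, bcntL_brenM_E a ξ e]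
  | tmu c => simp only [brenME, bcntLE, bcntL_brenM_C (a+1) ξ c]
end

theorem BIsVal.renL {v : BTm} (hv : BIsVal v) (ξ : ℕ → ℕ) : BIsVal (brenLT ξ v) := by
  cases hv <;> constructor
theorem BIsVal.renM {v : BTm} (hv : BIsVal v) (ξ : ℕ → ℕ) : BIsVal (brenMT ξ v) := by
  cases hv <;> constructor
theorem IsVal.renL {v : Tm} (hv : IsVal v) (ξ : ℕ → ℕ) : IsVal (renLT ξ v) := by
  cases hv <;> constructor
theorem IsVal.renM {v : Tm} (hv : IsVal v) (ξ : ℕ → ℕ) : IsVal (renMT ξ v) := by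
  cases hv <;> constructor

/-! ## Reduction under renamings -/

theorem BRootT.brenL (ξ : ℕ → ℕ) {t t' : BTm} (h : BRootT t t') :
    BRootT (brenLT ξ t) (brenLT ξ t') := by
  cases h
  simp only [brenLT, brenLC, brenLE, brenL_brenM_T]
  exact .theta _

theorem BRootT.brenM (ξ : ℕ → ℕ) {t t' : BTm} (h : BRootT t t') :
    BRootT (brenMT ξ t) (brenMT ξ t') := by
  cases h
  simp only [brenMT, brenMC, brenME, upr, brenMT_upr_brenMT_succ]
  exact .theta _

theorem brenLC_bmsub0 (ξ : ℕ → ℕ) (e : BCt) (c : BCm) :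
    brenLC ξ (bmsubC (bsub0M e) c) = bmsubC (bsub0M (brenLE ξ e)) (brenLC ξ c) := by
  rw [brenL_bmsub_C]; congr 1; funext k; cases k <;> rfl

theorem brenMC_bmsub0 (ξ : ℕ → ℕ) (e : BCt) (c : BCm) :
    brenMC ξ (bmsubC (bsub0M e) c) = bmsubC (bsub0M (brenME ξ e)) (brenMC (upr ξ) c) := by
  rw [brenM_bmsub_C, bmsub_brenM_C]; congr 1; funext k; cases k <;> rfl

theorem brenLC_blsub0 (ξ : ℕ → ℕ) (v : BTm) (c : BCm) :
    brenLC ξ (blsubC (bsub0L v) c) = blsubC (bsub0L (brenLT ξ v)) (brenLC (upr ξ) c) := by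
  rw [brenL_blsub_C, blsub_brenL_C]; congr 1; funext k; cases k <;> rfl

theorem brenMT_blsub0 (ξ : ℕ → ℕ) (v t : BTm) :
    brenMT ξ (blsubT (bsub0L v) t) = blsubT (bsub0L (brenMT ξ v)) (brenMT ξ t) := by
  rw [brenM_blsub_T]; congr 1; funext k; cases k <;> rfl

theorem brenMC_blsub0 (ξ : ℕ → ℕ) (v : BTm) (c : BCm) :
    brenMC ξ (blsubC (bsub0L v) c) = blsubC (bsub0L (brenMT ξ v)) (brenMC ξ c) := by
  rw [brenM_blsub_C]; congr 1; funext k; cases k <;> rfl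

theorem BRootCv.brenL (ξ : ℕ → ℕ) {c c' : BCm} (h : BRootCv c c') :
    BRootCv (brenLC ξ c) (brenLC ξ c') := by
  cases h with
  | beta u t e =>
      simp only [brenLC, brenLT, brenLE, brenLE_upr_brenLE_succ]
      exact .beta _ _ _
  | mu c e =>
      simp only [brenLC, brenLT, brenLC_bmsub0]
      exact .mu _ _
  | mutildev v c hv =>
      simp only [brenLC, brenLE, brenLC_blsub0]
      exact .mutildev _ _ (hv.renL ξ)

theorem BRootCv.brenM (ξ : ℕ → ℕ) {c c' : BCm} (h : BRootCv c c') :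
    BRootCv (brenMC ξ c) (brenMC ξ c') := by
  cases h with
  | beta u t e =>
      simp only [brenMC, brenMT, brenME, ← brenL_brenM_E]
      exact .beta _ _ _
  | mu c e =>
      simp only [brenMC, brenMT, brenMC_bmsub0]
      exact .mu _ _
  | mutildev v c hv =>
      simp only [brenMC, brenME, brenMC_blsub0]
      exact .mutildev _ _ (hv.renM ξ)

theorem BRootCvlin.brenL (ξ : ℕ → ℕ) {c c' : BCm} (h : BRootCvlin c c') :
    BRootCvlin (brenLC ξ c) (brenLC ξ c') := by
  cases h with
  | beta u t e =>
      simp only [brenLC, brenLT, brenLE, brenLE_upr_brenLE_succ]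
      exact .beta _ _ _
  | mu c e hlin =>
      simp only [brenLC, brenLT, brenLC_bmsub0]
      refine .mu _ _ (hlin.imp (fun ⟨a, he⟩ => ⟨a, by rw [he]; rfl⟩) fun hc => ?_)
      rwa [bcntM_brenL_C]
  | mutildev v c hv hlin =>
      simp only [brenLC, brenLE, brenLC_blsub0]
      refine .mutildev _ _ (hv.renL ξ) (hlin.imp (fun ⟨x, hx⟩ => ⟨ξ x, by rw [hx]; rfl⟩)
        fun hc => ?_)
      rwa [bcntL_brenL_C 0 0 (upr ξ) (upr_eq_zero_iff ξ)]

theorem BRootCvlin.brenM (ξ : ℕ → ℕ) {c c' : BCm} (h : BRootCvlin c c') :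
    BRootCvlin (brenMC ξ c) (brenMC ξ c') := by
  cases h with
  | beta u t e =>
      simp only [brenMC, brenMT, brenME, ← brenL_brenM_E]
      exact .beta _ _ _
  | mu c e hlin =>
      simp only [brenMC, brenMT, brenMC_bmsub0]
      refine .mu _ _ (hlin.imp (fun ⟨a, he⟩ => ⟨ξ a, by rw [he]; rfl⟩) fun hc => ?_)
      rwa [bcntM_brenM_C 0 0 (upr ξ) (upr_eq_zero_iff ξ)]
  | mutildev v c hv hlin =>
      simp only [brenMC, brenME, brenMC_blsub0]
      refine .mutildev _ _ (hv.renM ξ) (hlin.imp (fun ⟨x, hx⟩ => ⟨x, by rw [hx]; rfl⟩)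
        fun hc => ?_)
      rwa [bcntL_brenM_C]

structure RenClosed (R1 : BTm → BTm → Prop) (R2 : BCm → BCm → Prop) : Prop where
  renL_T : ∀ (ξ : ℕ → ℕ) {t t'}, R1 t t' → R1 (brenLT ξ t) (brenLT ξ t')
  renM_T : ∀ (ξ : ℕ → ℕ) {t t'}, R1 t t' → R1 (brenMT ξ t) (brenMT ξ t')
  renL_C : ∀ (ξ : ℕ → ℕ) {c c'}, R2 c c' → R2 (brenLC ξ c) (brenLC ξ c')
  renM_C : ∀ (ξ : ℕ → ℕ) {c c'}, R2 c c' → R2 (brenMC ξ c) (brenMC ξ c')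

theorem renClosed_cbv : RenClosed BRootT BRootCv :=
  ⟨BRootT.brenL, BRootT.brenM, BRootCv.brenL, BRootCv.brenM⟩

theorem renClosed_cbv_lin : RenClosed BRootT BRootCvlin :=
  ⟨BRootT.brenL, BRootT.brenM, BRootCvlin.brenL, BRootCvlin.brenM⟩

section Congruence

variable {R1 : BTm → BTm → Prop} {R2 : BCm → BCm → Prop}

mutual
theorem JT.brenL (hR : RenClosed R1 R2) (ξ : ℕ → ℕ) {t t' : BTm} :
    JT R1 R2 t t' → JT R1 R2 (brenLT ξ t) (brenLT ξ t')
  | .root r => .root (hR.renL_T ξ r)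
  | .absC h => .absC (JT.brenL hR (upr ξ) h)
  | .mabsC h => .mabsC (JC.brenL hR ξ h)
theorem JC.brenL (hR : RenClosed R1 R2) (ξ : ℕ → ℕ) {c c' : BCm} :
    JC R1 R2 c c' → JC R1 R2 (brenLC ξ c) (brenLC ξ c')
  | .root r => .root (hR.renL_C ξ r)
  | .cutL _ h => .cutL _ (JT.brenL hR ξ h)
  | .cutR _ h => .cutR _ (JE.brenL hR ξ h)
theorem JE.brenL (hR : RenClosed R1 R2) (ξ : ℕ → ℕ) {e e' : BCt} :
    JE R1 R2 e e' → JE R1 R2 (brenLE ξ e) (brenLE ξ e')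
  | .consL _ h => .consL _ (JT.brenL hR ξ h)
  | .consR _ h => .consR _ (JE.brenL hR ξ h)
  | .tmuC h => .tmuC (JC.brenL hR (upr ξ) h)
end

mutual
theorem JT.brenM (hR : RenClosed R1 R2) (ξ : ℕ → ℕ) {t t' : BTm} :
    JT R1 R2 t t' → JT R1 R2 (brenMT ξ t) (brenMT ξ t')
  | .root r => .root (hR.renM_T ξ r)
  | .absC h => .absC (JT.brenM hR ξ h)
  | .mabsC h => .mabsC (JC.brenM hR (upr ξ) h)
theorem JC.brenM (hR : RenClosed R1 R2) (ξ : ℕ → ℕ) {c c' : BCm} :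
    JC R1 R2 c c' → JC R1 R2 (brenMC ξ c) (brenMC ξ c')
  | .root r => .root (hR.renM_C ξ r)
  | .cutL _ h => .cutL _ (JT.brenM hR ξ h)
  | .cutR _ h => .cutR _ (JE.brenM hR ξ h)
theorem JE.brenM (hR : RenClosed R1 R2) (ξ : ℕ → ℕ) {e e' : BCt} :
    JE R1 R2 e e' → JE R1 R2 (brenME ξ e) (brenME ξ e')
  | .consL _ h => .consL _ (JT.brenM hR ξ h)
  | .consR _ h => .consR _ (JE.brenM hR ξ h)
  | .tmuC h => .tmuC (JC.brenM hR ξ h)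
end

theorem star_absC {t t' : BTm} (h : Star (JT R1 R2) t t') :
    Star (JT R1 R2) (.abs t) (.abs t') :=
  ReflTransGen.lift BTm.abs (fun _ _ => JT.absC) _ _ h

theorem star_mabsC {c c' : BCm} (h : Star (JC R1 R2) c c') :
    Star (JT R1 R2) (.mabs c) (.mabs c') :=
  ReflTransGen.lift BTm.mabs (fun _ _ => JT.mabsC) _ _ h

theorem star_cutL {t t' : BTm} (e : BCt) (h : Star (JT R1 R2) t t') :
    Star (JC R1 R2) (.cut t e) (.cut t' e) :=
  ReflTransGen.lift (BCm.cut · e) (fun _ _ => JC.cutL e) _ _ h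

end Congruence

/-! ## The translation -/

def dagApp (U V : BTm) : BTm :=
  .mabs (.cut (brenMT Nat.succ V)
    (.tmu (.cut (brenLT Nat.succ (brenMT Nat.succ U)) (.cons (.var 0) (.cvar 0)))))

theorem dagT_app (u v : Tm) : dagT (.app u v) = dagApp (dagT u) (dagT v) := rfl

theorem star_dagApp_left {R1 : BTm → BTm → Prop} {R2 : BCm → BCm → Prop}
    (hR : RenClosed R1 R2) {U U' : BTm} (V : BTm)
    (h : Star (JT R1 R2) U U') : Star (JT R1 R2) (dagApp U V) (dagApp U' V) :=
  ReflTransGen.lift (dagApp · V)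
    (fun _ _ hs => .mabsC (.cutR _ (.tmuC (.cutL _ ((hs.brenM hR _).brenL hR _))))) _ _ h

theorem star_dagApp_right {R1 : BTm → BTm → Prop} {R2 : BCm → BCm → Prop}
    (hR : RenClosed R1 R2) (U : BTm) {V V' : BTm}
    (h : Star (JT R1 R2) V V') : Star (JT R1 R2) (dagApp U V) (dagApp U V') :=
  ReflTransGen.lift (dagApp U) (fun _ _ hs => .mabsC (.cutL _ (hs.brenM hR _))) _ _ h

mutual
theorem dagT_renLT (ξ : ℕ → ℕ) (t : Tm) : dagT (renLT ξ t) = brenLT ξ (dagT t) := by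
  cases t with
  | var x => rfl
  | abs t => simp only [renLT, dagT, brenLT, dagT_renLT (upr ξ) t]
  | app u v =>
      simp only [renLT, dagT, brenLT, brenLC, brenLE, dagT_renLT ξ u, dagT_renLT ξ v,
        brenL_brenL_T, brenL_brenM_T]
      rfl
  | mabs c => simp only [renLT, dagT, brenLT, dagC_renLC ξ c]
theorem dagC_renLC (ξ : ℕ → ℕ) (c : Cm) : dagC (renLC ξ c) = brenLC ξ (dagC c) := by
  cases c with
  | cmd a t => simp only [renLC, dagC, brenLC, dagT_renLT ξ t, brenLE]
end

mutual
theorem dagT_renMT (ξ : ℕ → ℕ) (t : Tm) : dagT (renMT ξ t) = brenMT ξ (dagT t) := by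
  cases t with
  | var x => rfl
  | abs t => simp only [renMT, dagT, brenMT, dagT_renMT ξ t]
  | app u v =>
      simp only [renMT, dagT, brenMT, brenMC, brenME, dagT_renMT ξ u, dagT_renMT ξ v,
        brenM_brenM_T, brenL_brenM_T]
      rfl
  | mabs c => simp only [renMT, dagT, brenMT, dagC_renMC (upr ξ) c]
theorem dagC_renMC (ξ : ℕ → ℕ) (c : Cm) : dagC (renMC ξ c) = brenMC ξ (dagC c) := by
  cases c with
  | cmd a t => simp only [renMC, dagC, brenMC, dagT_renMT ξ t, brenME]
end

theorem dagE_renLE (ξ : ℕ → ℕ) (e : Ct) : dagE (renLE ξ e) = brenLE ξ (dagE e) := by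
  cases e with
  | cvar a => rfl
  | push b t =>
      simp only [renLE, dagE, brenLE, brenLC, brenLT, dagT_renLT ξ t, brenL_brenL_T]
      rfl
  | cons e t => simp only [renLE, dagE, brenLE, dagT_renLT ξ t, dagE_renLE ξ e]

theorem dagE_renME (ξ : ℕ → ℕ) (e : Ct) : dagE (renME ξ e) = brenME ξ (dagE e) := by
  cases e with
  | cvar a => rfl
  | push b t => simp only [renME, dagE, brenME, brenMC, brenMT, dagT_renMT ξ t, brenL_brenM_T]
  | cons e t => simp only [renME, dagE, brenME, dagT_renMT ξ t, dagE_renME ξ e]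

theorem IsVal.dagT {v : Tm} (hv : IsVal v) : BIsVal (dagT v) := by
  cases hv <;> constructor

theorem bmsubT_bupsM_brenMT_succ (σ : ℕ → BCt) (V : BTm) :
    bmsubT (bupsM σ) (brenMT Nat.succ V) = brenMT Nat.succ (bmsubT σ V) := by
  rw [bmsub_brenM_T, brenM_bmsub_T]; rfl

theorem bmsubT_dagApp (σ : ℕ → BCt) (U V : BTm) :
    bmsubT σ (dagApp U V) = dagApp (bmsubT σ U) (bmsubT σ V) := by
  have hU : bmsubT (fun k => brenLE Nat.succ (bupsM σ k)) (brenLT Nat.succ (brenMT Nat.succ U))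
      = brenLT Nat.succ (brenMT Nat.succ (bmsubT σ U)) := by
    rw [← brenL_bmsub_T, bmsubT_bupsM_brenMT_succ]
  simp only [dagApp, bmsubT, bmsubC, bmsubE, hU, bmsubT_bupsM_brenMT_succ]
  rfl

theorem blsubT_dagApp (σ : ℕ → BTm) (U V : BTm) :
    blsubT σ (dagApp U V) = dagApp (blsubT σ U) (blsubT σ V) := by
  have hU : blsubT (bupsL fun k => brenMT Nat.succ (σ k)) (brenLT Nat.succ (brenMT Nat.succ U))
      = brenLT Nat.succ (brenMT Nat.succ (blsubT σ U)) := by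
    rw [blsub_brenL_T, brenM_blsub_T, brenL_blsub_T]; rfl
  simp only [dagApp, blsubT, blsubC, blsubE, hU, ← brenM_blsub_T]
  rfl

mutual
theorem dagT_lsubT (σ : ℕ → Tm) (t : Tm) :
    dagT (lsubT σ t) = blsubT (fun k => dagT (σ k)) (dagT t) := by
  cases t with
  | var x => rfl
  | abs t =>
      simp only [lsubT, dagT, blsubT, dagT_lsubT (upsL σ) t]
      refine congrArg (fun σ => BTm.abs (blsubT σ (dagT t))) (funext fun k => ?_)
      cases k
      · rfl
      · exact dagT_renLT _ _
  | app a b => simp only [lsubT, dagT_app, blsubT_dagApp, dagT_lsubT σ a, dagT_lsubT σ b]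
  | mabs c => simp only [lsubT, dagT, blsubT, dagC_lsubC _ c, dagT_renMT]
theorem dagC_lsubC (σ : ℕ → Tm) (c : Cm) :
    dagC (lsubC σ c) = blsubC (fun k => dagT (σ k)) (dagC c) := by
  cases c with
  | cmd a t => simp only [lsubC, dagC, blsubC, blsubE, dagT_lsubT σ t]
end

/-! ## Administrative redexes and structural substitution -/

def dagFill : Ct → BTm → BCm
  | .cvar a, S => .cut S (.cvar a)
  | .push b u, S => .cut (dagApp (dagT u) S) (.cvar b)
  | .cons h u, S => dagFill h (dagApp S (dagT u))

theorem dagC_fill (e : Ct) (t : Tm) : dagC (fill e t) = dagFill e (dagT t) := by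
  induction e generalizing t with
  | cvar a => rfl
  | push b u => rfl
  | cons h u ih => exact ih _

/-- The contexts substituted by the call-by-value rules: their arguments are values. -/
inductive IsValCt : Ct → Prop
  | cvar (a : ℕ) : IsValCt (.cvar a)
  | push (b : ℕ) (t : Tm) : IsValCt (.push b t)
  | cons {e : Ct} {v : Tm} : IsValCt e → IsVal v → IsValCt (.cons e v)

theorem IsValCt.renLE {e : Ct} (h : IsValCt e) (ξ : ℕ → ℕ) : IsValCt (renLE ξ e) := by
  induction h with
  | cvar a => exact .cvar a
  | push b t => exact .push b _
  | cons _ hv ih => exact .cons ih (hv.renL ξ)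

theorem IsValCt.renME {e : Ct} (h : IsValCt e) (ξ : ℕ → ℕ) : IsValCt (renME ξ e) := by
  induction h with
  | cvar a => exact .cvar _
  | push b t => exact .push _ _
  | cons _ hv ih => exact .cons ih (hv.renM ξ)

theorem bmsubT_bsub0M_brenMT_succ (E : BCt) (S : BTm) :
    bmsubT (bsub0M E) (brenMT Nat.succ S) = S := by
  rw [bmsub_brenM_T]; exact bmsub_id_T S

theorem blsubT_bsub0L_brenLT_succ (V S : BTm) :
    blsubT (bsub0L V) (brenLT Nat.succ S) = S := by
  rw [blsub_brenL_T]; exact blsub_id_T S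

theorem blsubE_bsub0L_brenLE_succ (V : BTm) (E : BCt) :
    blsubE (bsub0L V) (brenLE Nat.succ E) = E := by
  rw [blsub_brenL_E]; exact blsub_id_E E

theorem lbstepVC_cut_dagApp (U V : BTm) (E : BCt) :
    LBStepVC (.cut (dagApp U V) E)
      (.cut V (.tmu (.cut (brenLT Nat.succ U) (.cons (.var 0) (brenLE Nat.succ E))))) := by
  have hlin : bcntMC 0 (.cut (brenMT Nat.succ V)
      (.tmu (.cut (brenLT Nat.succ (brenMT Nat.succ U)) (.cons (.var 0) (.cvar 0))))) = 1 := by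
    simp only [bcntMC, bcntME, bcntMT, bcntM_brenL_T,
      bcntM_brenM_eq_zero_T 0 Nat.succ Nat.succ_ne_zero]
    rfl
  have h := BRootCvlin.mu _ E (Or.inr hlin)
  simp only [bmsubC, bmsubT, bmsubE, bmsubT_bsub0M_brenMT_succ, ← brenL_bmsub_T] at h
  exact .root h

theorem lbstepVC_val_tmu {V : BTm} (hV : BIsVal V) (U : BTm) (E : BCt) :
    LBStepVC (.cut V (.tmu (.cut (brenLT Nat.succ U) (.cons (.var 0) (brenLE Nat.succ E)))))
      (.cut U (.cons V E)) := by
  have hlin : bcntLC 0 (.cut (brenLT Nat.succ U) (.cons (.var 0) (brenLE Nat.succ E))) = 1 := by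
    simp only [bcntLC, bcntLE, bcntLT, bcntL_brenL_eq_zero_T 0 Nat.succ Nat.succ_ne_zero,
      bcntL_brenL_eq_zero_E 0 Nat.succ Nat.succ_ne_zero]
    rfl
  have h := BRootCvlin.mutildev _ _ hV (Or.inr hlin)
  simp only [blsubC, blsubT, blsubE, blsubT_bsub0L_brenLT_succ, blsubE_bsub0L_brenLE_succ] at h
  exact .root h

theorem lbstar_dagFill {e : Ct} (he : IsValCt e) (S : BTm) :
    Star LBStepVC (dagFill e S) (.cut S (dagE e)) := by
  induction he generalizing S with
  | cvar a => exact .refl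
  | push b t => exact .single (lbstepVC_cut_dagApp _ _ _)
  | @cons h u _ hu ih =>
      exact (ih _).tail (lbstepVC_cut_dagApp _ _ _) |>.tail (lbstepVC_val_tmu hu.dagT _ _)

mutual
theorem lbstar_dagT_msubT (σ : ℕ → Ct) (hσ : ∀ k, IsValCt (σ k)) (t : Tm) :
    Star LBStepVT (dagT (msubT σ t)) (bmsubT (fun k => dagE (σ k)) (dagT t)) := by
  cases t with
  | var x => exact .refl
  | abs t =>
      have ih := lbstar_dagT_msubT _ (fun k => (hσ k).renLE Nat.succ) t
      simp only [dagE_renLE] at ih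
      exact star_absC ih
  | mabs c =>
      have hσ' : ∀ k, IsValCt (upsM σ k)
        | 0 => .cvar 0
        | k + 1 => (hσ k).renME _
      have ih := lbstar_dagC_msubC (upsM σ) hσ' c
      rw [show (fun k => dagE (upsM σ k)) = bupsM (fun k => dagE (σ k)) from
        funext fun | 0 => rfl | k + 1 => dagE_renME _ _] at ih
      exact star_mabsC ih
  | app a b =>
      simp only [msubT, dagT_app, bmsubT_dagApp]
      exact (star_dagApp_left renClosed_cbv_lin _ (lbstar_dagT_msubT σ hσ a)).trans
        (star_dagApp_right renClosed_cbv_lin _ (lbstar_dagT_msubT σ hσ b))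
theorem lbstar_dagC_msubC (σ : ℕ → Ct) (hσ : ∀ k, IsValCt (σ k)) (c : Cm) :
    Star LBStepVC (dagC (msubC σ c)) (bmsubC (fun k => dagE (σ k)) (dagC c)) := by
  cases c with
  | cmd a t =>
      rw [msubC, dagC_fill]
      exact (lbstar_dagFill (hσ a) _).trans (star_cutL _ (lbstar_dagT_msubT σ hσ t))
end

/-! ## Simulation of call-by-value steps -/

def DagJoinT (t w : Tm) : Prop := ∃ u, Star BStepVT (dagT t) u ∧ Star LBStepVT (dagT w) u

def DagJoinC (c d : Cm) : Prop := ∃ u, Star BStepVC (dagC c) u ∧ Star LBStepVC (dagC d) u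

theorem bstepVT_dagApp_val (U : BTm) {V : BTm} (hV : BIsVal V) :
    BStepVT (dagApp U V)
      (.mabs (.cut (brenMT Nat.succ U) (.cons (brenMT Nat.succ V) (.cvar 0)))) := by
  have h := BRootCv.mutildev _
    (.cut (brenLT Nat.succ (brenMT Nat.succ U)) (.cons (.var 0) (.cvar 0))) (hV.renM Nat.succ)
  simp only [blsubC, blsubE, blsubT, bsub0L, blsubT_bsub0L_brenLT_succ] at h
  exact .mabsC (.root h)

theorem DagJoinT.betav {u t : Tm} (ht : IsVal t) :
    DagJoinT (.app (.abs u) t) (lsubT (sub0L t) u) := by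
  have hsub : (fun k => dagT (sub0L t k)) = bsub0L (dagT t) := funext fun | 0 | _ + 1 => rfl
  refine ⟨blsubT (bsub0L (dagT t)) (dagT u), ?_, by rw [dagT_lsubT, hsub]⟩
  have hbeta := BRootCv.beta (brenMT Nat.succ (dagT u)) (brenMT Nat.succ (dagT t)) (.cvar 0)
  have hmutilde := BRootCv.mutildev _ (.cut (brenMT Nat.succ (dagT u)) (.cvar 0))
    (ht.dagT.renM Nat.succ)
  rw [blsubC, blsubE, ← brenMT_blsub0] at hmutilde
  exact .head (bstepVT_dagApp_val _ ht.dagT) <| .head (.mabsC (.root hbeta)) <|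
    .head (.mabsC (.root hmutilde)) <| .single (.root (.theta _))

theorem dagE_sub1M_zero (e : Ct) :
    (fun k => dagE (sub1M 0 e k)) = fun k => bsub0M (dagE e) (upr Nat.succ k) :=
  funext fun | 0 => rfl | _ + 1 => rfl

theorem IsValCt.sub1M {e : Ct} (he : IsValCt e) (a k : ℕ) : IsValCt (sub1M a e k) := by
  unfold CHSim.sub1M; split_ifs
  exacts [he, .cvar k]

/-- μᵥ and μ' both reduce to a μ-redex of `(μα.c)†` against the translated context. -/
theorem DagJoinT.mabs_msubC_sub1M {s : Tm} {c : Cm} {e : Ct} (he : IsValCt e)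
    (hs : Star BStepVT (dagT s) (.mabs (.cut (brenMT Nat.succ (.mabs (dagC c))) (dagE e)))) :
    DagJoinT s (.mabs (msubC (sub1M 0 e) c)) := by
  refine ⟨.mabs (bmsubC (fun k => dagE (sub1M 0 e k)) (dagC c)), hs.tail (.mabsC (.root ?_)),
    star_mabsC (lbstar_dagC_msubC _ (he.sub1M 0) c)⟩
  rw [dagE_sub1M_zero, ← bmsub_brenM_C]
  exact .mu _ _

theorem DagJoinT.muv {c : Cm} {t : Tm} (ht : IsVal t) :
    DagJoinT (.app (.mabs c) t)
      (.mabs (msubC (sub1M 0 (.cons (.cvar 0) (renMT Nat.succ t))) c)) := by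
  refine .mabs_msubC_sub1M (.cons (.cvar 0) (ht.renM _)) (.single ?_)
  rw [dagE, dagT_renMT]
  exact bstepVT_dagApp_val _ ht.dagT

theorem DagJoinT.mu' (t : Tm) (c : Cm) :
    DagJoinT (.app t (.mabs c)) (.mabs (msubC (sub1M 0 (.push 0 (renMT Nat.succ t))) c)) := by
  refine .mabs_msubC_sub1M (.push 0 _) ?_
  rw [dagE, dagT_renMT]
  exact .refl

theorem DagJoinT.theta (t : Tm) : DagJoinT (.mabs (.cmd 0 (renMT Nat.succ t))) t :=
  ⟨dagT t, .single (by rw [dagT, dagC, dagT_renMT]; exact .root (.theta _)), .refl⟩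

theorem DagJoinC.rho (b : ℕ) (c : Cm) :
    DagJoinC (.cmd b (.mabs c)) (msubC (sub0M (.cvar b)) c) := by
  have hσ : ∀ k, IsValCt (sub0M (.cvar b) k)
    | 0 => .cvar b
    | k + 1 => .cvar k
  have h := lbstar_dagC_msubC _ hσ c
  rw [show (fun k => dagE (sub0M (.cvar b) k)) = bsub0M (.cvar b) from
    funext fun | 0 | _ + 1 => rfl] at h
  exact ⟨_, .single (.root (.mu _ _)), h⟩

theorem DagJoinT.of_rootTv {t w : Tm} : RootTv t w → DagJoinT t w
  | .betav _ _ ht => .betav ht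
  | .muv _ _ ht => .muv ht
  | .mu' t c => .mu' t c
  | .theta t => .theta t

theorem DagJoinT.abs {t t' : Tm} : DagJoinT t t' → DagJoinT (.abs t) (.abs t')
  | ⟨u, h, h'⟩ => ⟨.abs u, star_absC h, star_absC h'⟩

theorem DagJoinT.appL {t t' : Tm} (v : Tm) : DagJoinT t t' → DagJoinT (.app t v) (.app t' v)
  | ⟨u, h, h'⟩ => ⟨dagApp u (dagT v), star_dagApp_left renClosed_cbv _ h,
      star_dagApp_left renClosed_cbv_lin _ h'⟩

theorem DagJoinT.appR (t : Tm) {v v' : Tm} : DagJoinT v v' → DagJoinT (.app t v) (.app t v')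
  | ⟨u, h, h'⟩ => ⟨dagApp (dagT t) u, star_dagApp_right renClosed_cbv _ h,
      star_dagApp_right renClosed_cbv_lin _ h'⟩

theorem DagJoinT.mabs {c c' : Cm} : DagJoinC c c' → DagJoinT (.mabs c) (.mabs c')
  | ⟨u, h, h'⟩ => ⟨.mabs u, star_mabsC h, star_mabsC h'⟩

theorem DagJoinC.cmd (a : ℕ) {t t' : Tm} : DagJoinT t t' → DagJoinC (.cmd a t) (.cmd a t')
  | ⟨u, h, h'⟩ => ⟨.cut u (.cvar a), star_cutL _ h, star_cutL _ h'⟩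

mutual
theorem DagJoinT.of_stepVT {t w : Tm} : StepVT t w → DagJoinT t w
  | .root r => .of_rootTv r
  | .absC h => DagJoinT.abs (DagJoinT.of_stepVT h)
  | .appL v h => DagJoinT.appL v (DagJoinT.of_stepVT h)
  | .appR t h => DagJoinT.appR t (DagJoinT.of_stepVT h)
  | .mabsC h => DagJoinT.mabs (DagJoinC.of_stepVC h)
theorem DagJoinC.of_stepVC {c d : Cm} : StepVC c d → DagJoinC c d
  | .root (.rho b c) => .rho b c
  | .cmdC a h => DagJoinC.cmd a (DagJoinT.of_stepVT h)
end

/-- call-by-value simulation of λμ by λ̄μμ̃.  If `t` reduces to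
`w` by one call-by-value λμ-step, then there is `u` with `t† →v* u` and
`w† →lin-v* u`; and likewise for commands. -/
theorem cbv_lm_lmm_simulation :
    (∀ t w : Tm, StepVT t w →
      ∃ u : BTm, Star BStepVT (dagT t) u ∧ Star LBStepVT (dagT w) u) ∧
    (∀ c d : Cm, StepVC c d →
      ∃ u : BCm, Star BStepVC (dagC c) u ∧ Star LBStepVC (dagC d) u) :=
  ⟨fun _ _ => DagJoinT.of_stepVT, fun _ _ => DagJoinC.of_stepVC⟩

end CHSim
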